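/- Define C_est(α) = [S(α) − 2α]/(2√(1+α²) − 2α), where S(α) = (1−p)[α(cosθ₂ + cosθ₃) + sinθ₁(sinθ₂ − sinθ₃) + cosθ₁(cosθ₂ − cosθ₃)] with 0 ≤ p ≤ 1. If (1−p)[sinθ₁(sinθ₂ − sinθ₃) + cosθ₂(√2+1+cosθ₁) + cosθ₃(√2+1−cosθ₁)] > 2(1+√2), then C_est(1) > 0 and there exists α > 1 with C_est(α) > C_est(1). -/

import Mathlib

/-!
Writing `A = (1 - p)(cos θ₂ + cos θ₃)` and `B` for the `α`-free part of `S`, the estimate is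
`C(α) = ((A - 2) α + B) / (2√(1 + α²) - 2α)`. Its derivative at `α = 1` is a positive multiple
of `(√2 + 1)(A - 2) + B`, which is positive exactly under the hypothesis, so `C` increases just
to the right of `1`. Since `A ≤ 2` for `0 ≤ p ≤ 1`, the same quantity bounds the numerator
`A - 2 + B` of `C(1)` from below, which gives `C(1) > 0`.
-/

open Real Filter Topology

theorem HasDerivAt.exists_gt_lt_of_pos {f : ℝ → ℝ} {f' x : ℝ} (hf : HasDerivAt f f' x)
    (hf' : 0 < f') : ∃ y > x, f x < f y := by
  have hslope : ∀ᶠ y in 𝓝[>] x, 0 < slope f x y :=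
    (hasDerivAt_iff_tendsto_slope_left_right.mp hf).2.eventually (eventually_gt_nhds hf')
  obtain ⟨y, hy, hxy⟩ := (hslope.and self_mem_nhdsWithin).exists
  exact ⟨y, hxy, (slope_pos_iff hxy).mp hy⟩

theorem hasDerivAt_sqrt_one_add_sq (x : ℝ) :
    HasDerivAt (fun x => √(1 + x ^ 2)) (x / √(1 + x ^ 2)) x :=
  (((hasDerivAt_pow 2 x).const_add 1).sqrt (by positivity)).congr_deriv (by
    field_simp
    norm_num)

noncomputable def concurrenceEstimate (a b α : ℝ) : ℝ :=
  (a * α + b) / (2 * √(1 + α ^ 2) - 2 * α)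

theorem concurrenceEstimate_one (a b : ℝ) :
    concurrenceEstimate a b 1 = (a + b) / (2 * √2 - 2) := by
  norm_num [concurrenceEstimate]

-- The identity `(2 - √2)(√2 + 1) = √2` puts the quotient-rule numerator in this factored form.
theorem hasDerivAt_concurrenceEstimate_one (a b : ℝ) :
    HasDerivAt (concurrenceEstimate a b)
      ((2 - √2) * ((√2 + 1) * a + b) / (2 * √2 - 2) ^ 2) 1 := by
  have hsqrt2 : √2 ^ 2 = 2 := sq_sqrt (by norm_num)
  have hnum : HasDerivAt (fun α : ℝ => a * α + b) a 1 := by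
    simpa using ((hasDerivAt_id (1 : ℝ)).const_mul a).add_const b
  have hden : HasDerivAt (fun α : ℝ => 2 * √(1 + α ^ 2) - 2 * α) (√2 - 2) 1 :=
    (((hasDerivAt_sqrt_one_add_sq 1).const_mul 2).sub
      ((hasDerivAt_id (1 : ℝ)).const_mul 2)).congr_deriv (by
        norm_num
        field_simp
        linarith)
  have hden_ne : 2 * √(1 + 1 ^ 2) - 2 * 1 ≠ (0 : ℝ) := by
    norm_num
    nlinarith [one_lt_sqrt_two]
  refine (hnum.div hden hden_ne).congr_deriv ?_
  norm_num
  congr 1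
  linear_combination a * hsqrt2

/-- Werner-state analogue: if the condition holds, the concurrence estimate is positive
at `α = 1` and improves for some `α > 1`. -/
theorem werner_better_alpha (p θ1 θ2 θ3 : ℝ) (hp0 : 0 ≤ p) (hp1 : p ≤ 1)
    (Sf : ℝ → ℝ)
    (hSf : Sf = fun α => (1 - p) * (α * (cos θ2 + cos θ3)
      + sin θ1 * (sin θ2 - sin θ3) + cos θ1 * (cos θ2 - cos θ3)))
    (Cest : ℝ → ℝ)
    (hC : Cest = fun α => (Sf α - 2 * α) / (2 * Real.sqrt (1 + α ^ 2) - 2 * α))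
    (hcond : (1 - p) * (sin θ1 * (sin θ2 - sin θ3)
      + cos θ2 * (Real.sqrt 2 + 1 + cos θ1) + cos θ3 * (Real.sqrt 2 + 1 - cos θ1))
      > 2 * (1 + Real.sqrt 2)) :
    Cest 1 > 0 ∧ ∃ α > (1 : ℝ), Cest α > Cest 1 := by
  set A := (1 - p) * (cos θ2 + cos θ3)
  set B := (1 - p) * (sin θ1 * (sin θ2 - sin θ3) + cos θ1 * (cos θ2 - cos θ3))
  have hCest : Cest = concurrenceEstimate (A - 2) B := by
    funext α
    rw [hC, hSf, concurrenceEstimate]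
    simp only [A, B]
    ring
  have hA : A ≤ 2 := by
    nlinarith [mul_nonneg (sub_nonneg.2 hp1) (by linarith [cos_le_one θ2, cos_le_one θ3] :
      0 ≤ 2 - (cos θ2 + cos θ3))]
  have hcond' : 0 < (√2 + 1) * (A - 2) + B := by linear_combination hcond
  have hden : 0 < 2 * √2 - 2 := by linarith [one_lt_sqrt_two]
  rw [hCest]
  constructor
  · rw [concurrenceEstimate_one]
    exact div_pos (by nlinarith [sqrt_nonneg 2]) hden
  · refine (hasDerivAt_concurrenceEstimate_one (A - 2) B).exists_gt_lt_of_pos ?_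
    exact div_pos (mul_pos (by linarith [sqrt_two_lt_three_halves]) hcond') (pow_pos hden 2)
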